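/- Quantitative per-step surplus bound for asymptotic budget balance: for every executed step j of NRM in trees, with X_j ordered by decreasing subtree maxima v^{(1)}_{V_{x_1}} ≥ v^{(1)}_{V_{x_2}} ≥ … and λ = (n_{x_1}+n_{x_2})/n_{X_j}, the step surplus satisfies 0 ≤ p^{auc}_{a_j} − p^{auc}_{a_{j−1}} − Σ_{q∈X_j} R_q ≤ λ·(v^{(1)}_{V_{x_2}} − v^{(1)}_{V_{x_3}}) ≤ λ·M, where M is any upper bound on all reported valuations. -/

import Mathlib

open Finset

attribute [local instance] Classical.propDecidable

noncomputable section

/-- A tree network rooted at a resource owner `o`: the agents are the elements of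
the finite type `α`, and `parent i = none` means that the parent of agent `i` is
the owner `o` herself.  The field `depth` records the distance to the owner and
witnesses that the parent relation is well-founded. -/
structure TreeNet (α : Type) [Fintype α] [DecidableEq α] where
  parent : α → Option α
  depth : α → ℕ
  depth_root : ∀ i, parent i = none → depth i = 0
  depth_child : ∀ i j, parent i = some j → depth i = depth j + 1

namespace TreeNet

variable {α : Type} [Fintype α] [DecidableEq α]

/-- `j` is a strict ancestor of `i`: iterating `parent` from `i` reaches `j`. -/
def StrictAnc (T : TreeNet α) (j i : α) : Prop :=
  ∃ m : ℕ, 0 < m ∧ (fun x : Option α => x.bind T.parent)^[m] (some i) = some j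

/-- the subtree `V_i` of agent `i` inside the participant set `V`:
`i` together with all its descendants. -/
def sub (T : TreeNet α) (V : Finset α) (i : α) : Finset α :=
  V.filter fun x => x = i ∨ T.StrictAnc i x

/-- `n_i`, the number of agents in the subtree of `i`. -/
def nsub (T : TreeNet α) (V : Finset α) (i : α) : ℕ := (T.sub V i).card

/-- `v^{(1)}_D`: the highest reported valuation in `D` (with the convention `0`
for `D = ∅`). -/
def vmax (val : α → ℝ) (D : Finset α) : ℝ :=
  if h : D.Nonempty then D.sup' h val else 0

/-- the list of strict ancestors of `i`, ordered by increasing depth. -/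
def ancList (T : TreeNet α) (i : α) : List α :=
  match h : T.parent i with
  | none => []
  | some j => T.ancList j ++ [j]
termination_by T.depth i
decreasing_by
  have := T.depth_child i j h
  omega

/-- the full sequence `a_1, …, a_{k+1}`: the strict ancestors of the highest
bidder `hb` ordered by increasing depth, followed by `hb` itself. -/
def seq (T : TreeNet α) (hb : α) : List α := T.ancList hb ++ [hb]

/-- `a_j`, as an `Option α`: `none` for `j = 0` (the owner `o`) and out of range. -/
def aIdx (T : TreeNet α) (hb : α) (j : ℕ) : Option α :=
  if j = 0 then none else (T.seq hb)[j - 1]?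

/-- the required payment `p^{auc}_{a_j} = v^{(1)}_{V ∖ V_{a_j}}` (and `0` for `j = 0`). -/
def pauc (T : TreeNet α) (V : Finset α) (val : α → ℝ) (hb : α) (j : ℕ) : ℝ :=
  match T.aIdx hb j with
  | none => 0
  | some i => vmax val (V \ T.sub V i)

/-- the children inside `V` of a vertex (`none` denotes the owner `o`). -/
def childrenOf (T : TreeNet α) (V : Finset α) (x : Option α) : Finset α :=
  V.filter fun y => T.parent y = x

/-- `X_j`: the set of children of `a_{j-1}`. -/
def X (T : TreeNet α) (V : Finset α) (hb : α) (j : ℕ) : Finset α :=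
  T.childrenOf V (T.aIdx hb (j - 1))

/-- `n_{X_j} = Σ_{q ∈ X_j} n_q`. -/
def nX (T : TreeNet α) (V : Finset α) (hb : α) (j : ℕ) : ℕ :=
  ∑ q ∈ T.X V hb j, T.nsub V q

/-- subtree of an optional vertex, with the convention `∅` for `none`. -/
def subO (T : TreeNet α) (V : Finset α) : Option α → Finset α
  | none => ∅
  | some i => T.sub V i

/-- subtree of an optional vertex, with the convention `V` for the owner `o`. -/
def subUp (T : TreeNet α) (V : Finset α) : Option α → Finset α
  | none => V
  | some i => T.sub V i

/-- `S_{-q}` at step `j`, where `sel` selects a highest bidder in a given set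
(`h' = sel (V ∖ V_q)` is a highest bidder without `q`'s participation). -/
def Sneg (T : TreeNet α) (V : Finset α) (val : α → ℝ) (sel : Finset α → Option α)
    (hb : α) (j : ℕ) (q : α) : ℝ :=
  match sel (V \ T.sub V q) with
  | none => 0
  | some h' =>
      if T.aIdx h' (j - 1) = T.aIdx hb (j - 1) then
        vmax val (V \ (T.subO V (T.aIdx h' j) ∪ T.sub V q)) - T.pauc V val hb (j - 1)
      else 0

/-- the money `R_q = (n_q / n_{X_j}) ⬝ S_{-q}` redistributed to `q` in step `j`. -/
def R (T : TreeNet α) (V : Finset α) (val : α → ℝ) (sel : Finset α → Option α)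
    (hb : α) (j : ℕ) (q : α) : ℝ :=
  (T.nsub V q : ℝ) / (T.nX V hb j : ℝ) * T.Sneg V val sel hb j q

/-- the allocation condition `v̂_{a_j} ≥ p^{auc}_{a_j}` holds at step `j`. -/
def Stops (T : TreeNet α) (V : Finset α) (val : α → ℝ) (hb : α) (j : ℕ) : Prop :=
  ∃ i, T.aIdx hb j = some i ∧ T.pauc V val hb j ≤ val i

/-- the step `J` at which the procedure stops. -/
def stepJ (T : TreeNet α) (V : Finset α) (val : α → ℝ) (hb : α) : ℕ :=
  sInf {j | 1 ≤ j ∧ T.Stops V val hb j}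

/-- the winner of the item. -/
def winner (T : TreeNet α) (V : Finset α) (val : α → ℝ) (hb : α) : Option α :=
  T.aIdx hb (T.stepJ V val hb)

/-- the (first) step at which agent `i` is assigned a payment. -/
def stepOf (T : TreeNet α) (V : Finset α) (val : α → ℝ) (hb : α) (i : α) : ℕ :=
  sInf {j | 1 ≤ j ∧ j ≤ T.stepJ V val hb ∧ i ∈ T.X V hb j}

/-- the payment of agent `i` under NRM: the winner pays `p^{auc}_{a_J} - R_{a_J}`,
every other agent considered in some executed step `j` pays `-R_q`, and every
agent not assigned a payment pays `0`. -/
def pay (T : TreeNet α) (V : Finset α) (val : α → ℝ) (sel : Finset α → Option α)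
    (hb : α) (i : α) : ℝ :=
  if T.winner V val hb = some i then
    T.pauc V val hb (T.stepJ V val hb) - T.R V val sel hb (T.stepJ V val hb) i
  else if ∃ j, 1 ≤ j ∧ j ≤ T.stepJ V val hb ∧ i ∈ T.X V hb j then
    -T.R V val sel hb (T.stepOf V val hb i) i
  else 0

/-- the surplus `S = Σ_{i ∈ V} p_i` of the mechanism. -/
def surplus (T : TreeNet α) (V : Finset α) (val : α → ℝ) (sel : Finset α → Option α)
    (hb : α) : ℝ :=
  ∑ i ∈ V, T.pay V val sel hb i

/-- the utility of agent `i` whose true valuation is `tv`: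
`tv` if she wins, minus her payment. -/
def util (T : TreeNet α) (V : Finset α) (val : α → ℝ) (sel : Finset α → Option α)
    (hb : α) (tv : ℝ) (i : α) : ℝ :=
  (if T.winner V val hb = some i then tv else 0) - T.pay V val sel hb i

/-- the participant set `V` is closed under taking parents
(as is every set generated by invitation chains). -/
def Closed (T : TreeNet α) (V : Finset α) : Prop :=
  ∀ i ∈ V, ∀ j, T.parent i = some j → j ∈ V

/-- `hb` is a highest bidder of `V`. -/
def IsTop (V : Finset α) (val : α → ℝ) (hb : α) : Prop :=
  hb ∈ V ∧ ∀ i ∈ V, val i ≤ val hb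

/-- `sel` selects a highest bidder of every nonempty finite set of agents. -/
def SelValid (val : α → ℝ) (sel : Finset α → Option α) : Prop :=
  ∀ D : Finset α, (D.Nonempty → ∃ b, sel D = some b) ∧
    ∀ b, sel D = some b → b ∈ D ∧ ∀ x ∈ D, val x ≤ val b

/-- the true neighbour set of agent `i` that she may invite: her children. -/
def childrenAll (T : TreeNet α) (i : α) : Finset α :=
  Finset.univ.filter fun y => T.parent y = some i

/-- agent `i` is reached from the owner by the chains of invitations `inv`
(the owner informs all her neighbours, i.e. the agents with `parent = none`). -/
def Reached (T : TreeNet α) (inv : α → Finset α) (i : α) : Prop :=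
  match h : T.parent i with
  | none => True
  | some j => T.Reached inv j ∧ i ∈ inv j
termination_by T.depth i
decreasing_by
  have := T.depth_child i j h
  omega

/-- the participant set generated by the invitations `inv`. -/
def Vgen (T : TreeNet α) (inv : α → Finset α) : Finset α :=
  Finset.univ.filter fun i => T.Reached inv i

end TreeNet

/-!
Since `∑_{q ∈ X_j} n_q / n_{X_j} = 1`, the step surplus is the weighted average of
`Δ - S_{-q}` with `Δ = p^{auc}_{a_j} - p^{auc}_{a_{j-1}}`, so it suffices to bound each `S_{-q}`.
If the highest bidder `h'` of `V ∖ V_q` lies outside the subtree of `a_{j-1}`, then `S_{-q} = 0`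
and `Δ = 0`. Otherwise `S_{-q} + p^{auc}_{a_{j-1}}` is the highest bid `E` outside the subtrees
of `q` and of the child `a'_j` of `a_{j-1}` above `h'`. Two excluded siblings leave one of
`x₁, x₂, x₃` intact, so `v^{(1)}_{V_{x₃}} ≤ E ≤ p^{auc}_{a_j} ≤ max E v^{(1)}_{V_{x₂}}`, and
`v^{(1)}_{V_{x₂}} ≤ E` when `q ∉ {x₁, x₂}`. Hence
`0 ≤ Δ - S_{-q} ≤ v^{(1)}_{V_{x₂}} - v^{(1)}_{V_{x₃}}`, with `Δ - S_{-q} ≤ 0` for `q ∉ {x₁, x₂}`.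
-/

lemma sub_sum_weighted_bounds {ι : Type*} [DecidableEq ι] {X : Finset ι} {w s : ι → ℝ}
    {c δ N : ℝ} {x1 x2 : ι} (hN : N = ∑ q ∈ X, w q) (hw : ∀ q ∈ X, 0 ≤ w q) (hx1 : x1 ∈ X)
    (hx2 : x2 ∈ X) (h12 : x1 ≠ x2) (hw1 : 0 < w x1) (hs : ∀ q ∈ X, s q ≤ c)
    (hδ : ∀ q ∈ X, c - s q ≤ δ) (hrest : ∀ q ∈ X, q ≠ x1 → q ≠ x2 → c ≤ s q) :
    0 ≤ c - ∑ q ∈ X, w q / N * s q ∧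
      c - ∑ q ∈ X, w q / N * s q ≤ (w x1 + w x2) / N * δ := by
  have hN0 : 0 < N := hN ▸ hw1.trans_le (single_le_sum hw hx1)
  have hθ : ∀ q ∈ X, 0 ≤ w q / N := fun q hq => div_nonneg (hw q hq) hN0.le
  have hsum : c - ∑ q ∈ X, w q / N * s q = ∑ q ∈ X, w q / N * (c - s q) := by
    simp_rw [mul_sub, sum_sub_distrib, ← sum_mul, ← sum_div, ← hN, div_self hN0.ne', one_mul]
  rw [hsum]
  refine ⟨sum_nonneg fun q hq => mul_nonneg (hθ q hq) (sub_nonneg.2 (hs q hq)), ?_⟩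
  have hpair : {x1, x2} ⊆ X := insert_subset hx1 (singleton_subset_iff.2 hx2)
  rw [← sum_sdiff hpair, sum_pair h12, add_div, add_mul]
  have hout : ∑ q ∈ X \ {x1, x2}, w q / N * (c - s q) ≤ 0 := by
    refine sum_nonpos fun q hq => ?_
    simp only [mem_sdiff, mem_insert, mem_singleton, not_or] at hq
    exact mul_nonpos_of_nonneg_of_nonpos (hθ q hq.1) (by linarith [hrest q hq.1 hq.2.1 hq.2.2])
  have h1 := mul_le_mul_of_nonneg_left (hδ x1 hx1) (hθ x1 hx1)
  have h2 := mul_le_mul_of_nonneg_left (hδ x2 hx2) (hθ x2 hx2)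
  linarith

/-- Pigeonhole: `q` and `d` exclude at most two of the three ranked candidates. -/
lemma le_of_excluded_le_two {ι β : Type*} [Preorder β] {f : ι → β} {u : β} {x1 x2 x3 q : ι}
    {d : Option ι} (h12 : x1 ≠ x2) (h13 : x1 ≠ x3) (h23 : x2 ≠ x3) (h21 : f x2 ≤ f x1)
    (h32 : f x3 ≤ f x2) (hu : ∀ r, (r = x1 ∨ r = x2 ∨ r = x3) → r ≠ q → d ≠ some r → f r ≤ u) :
    f x3 ≤ u ∧ (q ≠ x1 → q ≠ x2 → f x2 ≤ u) := by
  have second : q ≠ x1 → q ≠ x2 → f x2 ≤ u := fun hq1 hq2 => by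
    by_cases hd1 : d = some x1
    · exact hu x2 (by simp) (Ne.symm hq2) (by simp [hd1, h12])
    · exact h21.trans (hu x1 (by simp) (Ne.symm hq1) hd1)
  refine ⟨?_, second⟩
  by_cases hq1 : q = x1
  · subst hq1
    by_cases hd2 : d = some x2
    · exact hu x3 (by simp) h13.symm (by simp [hd2, h23])
    · exact h32.trans (hu x2 (by simp) h12.symm hd2)
  by_cases hq2 : q = x2
  · subst hq2
    by_cases hd1 : d = some x1
    · exact hu x3 (by simp) h23.symm (by simp [hd1, h13])
    · exact h32.trans (h21.trans (hu x1 (by simp) (Ne.symm hq1) hd1))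
  · exact h32.trans (second hq1 hq2)

lemma List.le_second_of_isChain {ι β : Type*} [Preorder β] {f : ι → β} {a b : ι}
    {l : List ι} (h : (a :: b :: l).IsChain fun x y => f y ≤ f x) ⦃r : ι⦄ (hr : r ∈ a :: b :: l)
    (hra : r ≠ a) : f r ≤ f b := by
  have hpw := List.isChain_iff_pairwise.mp ((List.isChain_map (R := (· ≥ ·)) f).mpr h)
  rw [List.map_cons, List.map_cons, List.pairwise_cons, List.pairwise_cons,
    List.forall_mem_map] at hpw
  rcases List.mem_cons.mp hr with rfl | hr
  · exact absurd rfl hra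
  rcases List.mem_cons.mp hr with rfl | hr
  exacts [le_rfl, hpw.2.1 r hr]

namespace TreeNet

section Vmax

variable {α : Type} {val : α → ℝ} {D D' : Finset α}

lemma le_vmax {x : α} (hx : x ∈ D) : val x ≤ vmax val D := by
  rw [vmax, dif_pos ⟨x, hx⟩]
  exact Finset.le_sup' val hx

lemma vmax_le {B : ℝ} (hB : 0 ≤ B) (h : ∀ x ∈ D, val x ≤ B) : vmax val D ≤ B := by
  rw [vmax]
  split
  · exact Finset.sup'_le _ val h
  · exact hB

lemma vmax_nonneg (h : ∀ x ∈ D, 0 ≤ val x) : 0 ≤ vmax val D := by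
  rw [vmax]
  split
  · next hD => exact (h _ hD.choose_spec).trans (Finset.le_sup' val hD.choose_spec)
  · exact le_rfl

lemma vmax_mono (hDD' : D ⊆ D') (h : ∀ x ∈ D', 0 ≤ val x) : vmax val D ≤ vmax val D' :=
  vmax_le (vmax_nonneg h) fun _ hx => le_vmax (hDD' hx)

end Vmax

variable {α : Type} [Fintype α] [DecidableEq α]

section Tree

variable {T : TreeNet α} {V : Finset α}

/-- The ancestor `n` generations above `x` (`none` once the owner is passed). -/
def up (T : TreeNet α) (n : ℕ) (x : α) : Option α :=
  (fun o : Option α => o.bind T.parent)^[n] (some x)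

lemma up_succ (n : ℕ) (x : α) : T.up (n + 1) x = (T.up n x).bind T.parent :=
  Function.iterate_succ_apply' _ n _

lemma up_succ_of_parent_eq {x p : α} (h : T.parent x = some p) (n : ℕ) :
    T.up (n + 1) x = T.up n p := by
  simp only [up, Function.iterate_succ_apply, Option.bind_some, h]

lemma depth_eq_of_up_eq_some {n : ℕ} {x z : α} (h : T.up n x = some z) :
    T.depth x = T.depth z + n := by
  induction n generalizing z with
  | zero => simp_all [up]
  | succ n ih =>
    rw [up_succ] at h
    obtain ⟨y, hy, hyz⟩ := Option.bind_eq_some_iff.mp h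
    rw [ih hy, T.depth_child y z hyz]
    ring

lemma parent_eq_none_of_depth_eq_zero {x : α} (h : T.depth x = 0) : T.parent x = none := by
  cases hp : T.parent x with
  | none => rfl
  | some p => have := T.depth_child x p hp; omega

lemma depth_eq_of_parent_eq {x y : α} (h : T.parent x = T.parent y) :
    T.depth x = T.depth y := by
  cases hp : T.parent y with
  | none => rw [hp] at h; rw [T.depth_root x h, T.depth_root y hp]
  | some p => rw [hp] at h; rw [T.depth_child x p h, T.depth_child y p hp]

lemma seq_of_parent_eq_none {x : α} (h : T.parent x = none) : T.seq x = [x] := by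
  rw [seq, ancList.eq_def]
  split <;> simp_all

lemma seq_of_parent_eq_some {x p : α} (h : T.parent x = some p) :
    T.seq x = T.seq p ++ [x] := by
  rw [seq, ancList.eq_def, seq]
  split <;> simp_all

lemma length_seq (x : α) : (T.seq x).length = T.depth x + 1 := by
  induction h : T.depth x using Nat.strong_induction_on generalizing x with
  | _ n ih =>
    cases hp : T.parent x with
    | none => rw [seq_of_parent_eq_none hp, ← h, T.depth_root x hp]; rfl
    | some p =>
      have hd := T.depth_child x p hp
      rw [seq_of_parent_eq_some hp, List.length_append, ih _ (by omega) p rfl]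
      simp [← h, hd]

lemma getElem?_seq (x : α) (k : ℕ) :
    (T.seq x)[k]? = if k ≤ T.depth x then T.up (T.depth x - k) x else none := by
  induction h : T.depth x using Nat.strong_induction_on generalizing x k with
  | _ n ih =>
    cases hp : T.parent x with
    | none =>
      rw [seq_of_parent_eq_none hp, ← h, T.depth_root x hp]
      rcases k with _ | k <;> simp [up]
    | some p =>
      have hd := T.depth_child x p hp
      have ihp := ih _ (by omega) p k rfl
      rw [seq_of_parent_eq_some hp, List.getElem?_append, length_seq, ← h, hd]
      split_ifs <;> try omega
      · rw [ihp, if_pos (by omega), show T.depth p + 1 - k = T.depth p - k + 1 by omega,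
          up_succ_of_parent_eq hp]
      · simp [show k = T.depth p + 1 by omega, up]
      · simp [show k - (T.depth p + 1) ≠ 0 by omega]

lemma aIdx_succ (x : α) (k : ℕ) : T.aIdx x (k + 1) = (T.seq x)[k]? := rfl

lemma eq_or_strictAnc_iff {w x : α} : (x = w ∨ T.StrictAnc w x) ↔ ∃ m, T.up m x = some w := by
  constructor
  · rintro (rfl | ⟨m, -, hm⟩)
    exacts [⟨0, rfl⟩, ⟨m, hm⟩]
  · rintro ⟨_ | m, hm⟩
    exacts [Or.inl (Option.some_inj.mp hm), Or.inr ⟨m + 1, m.succ_pos, hm⟩]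

lemma exists_up_eq_some_iff {w x : α} :
    (∃ m, T.up m x = some w) ↔ T.aIdx x (T.depth w + 1) = some w := by
  rw [aIdx_succ, getElem?_seq]
  constructor
  · rintro ⟨m, hm⟩
    have hd := depth_eq_of_up_eq_some hm
    rwa [if_pos (by omega), show T.depth x - T.depth w = m by omega]
  · split_ifs
    exacts [fun h => ⟨_, h⟩, fun h => absurd h (by simp)]

lemma mem_sub_iff {w x : α} : x ∈ T.sub V w ↔ x ∈ V ∧ T.aIdx x (T.depth w + 1) = some w := by
  rw [sub, Finset.mem_filter, eq_or_strictAnc_iff, exists_up_eq_some_iff]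

lemma depth_succ_of_aIdx_eq_some {x w : α} {k : ℕ} (h : T.aIdx x k = some w) :
    T.depth w + 1 = k := by
  rcases k with _ | k
  · simp [aIdx] at h
  rw [aIdx_succ, getElem?_seq] at h
  split_ifs at h with hk
  have := depth_eq_of_up_eq_some h
  omega

lemma parent_eq_aIdx_pred {x w : α} {k : ℕ} (h : T.aIdx x k = some w) :
    T.parent w = T.aIdx x (k - 1) := by
  have hk := depth_succ_of_aIdx_eq_some h
  rcases k with _ | _ | k
  · omega
  · exact (parent_eq_none_of_depth_eq_zero (by omega)).trans rfl
  · rw [aIdx_succ, getElem?_seq] at h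
    split_ifs at h with hle
    rw [Nat.add_sub_cancel, aIdx_succ, getElem?_seq, if_pos (by omega),
      show T.depth x - k = T.depth x - (k + 1) + 1 by omega, up_succ, h, Option.bind_some]

lemma mem_sub_self {w : α} (hw : w ∈ V) : w ∈ T.sub V w :=
  Finset.mem_filter.mpr ⟨hw, Or.inl rfl⟩

lemma sub_subset (w : α) : T.sub V w ⊆ V := Finset.filter_subset _ _

lemma eq_of_mem_sub_of_mem_sub {r r' x : α} (hd : T.depth r = T.depth r')
    (hx : x ∈ T.sub V r) (hx' : x ∈ T.sub V r') : r = r' := by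
  rw [mem_sub_iff] at hx hx'
  rw [hd] at hx
  exact Option.some_inj.mp (hx.2.symm.trans hx'.2)

lemma Closed.mem_of_up_eq_some (hV : T.Closed V) {m : ℕ} {x z : α} (hx : x ∈ V)
    (h : T.up m x = some z) : z ∈ V := by
  induction m generalizing z with
  | zero => simp_all [up]
  | succ m ih =>
    rw [up_succ] at h
    obtain ⟨y, hy, hyz⟩ := Option.bind_eq_some_iff.mp h
    exact hV y (ih hy) z hyz

lemma Closed.mem_of_mem_sub (hV : T.Closed V) {w x : α} (h : x ∈ T.sub V w) : w ∈ V := by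
  obtain ⟨hx, hanc⟩ := Finset.mem_filter.mp h
  obtain ⟨m, hm⟩ := eq_or_strictAnc_iff.mp hanc
  exact hV.mem_of_up_eq_some hx hm

lemma sub_subset_subUp_parent (w : α) : T.sub V w ⊆ T.subUp V (T.parent w) := by
  intro x hx
  cases hp : T.parent w with
  | none => exact sub_subset w hx
  | some p =>
    obtain ⟨hxV, hxw⟩ := mem_sub_iff.mp hx
    have hxp := (parent_eq_aIdx_pred hxw).symm.trans hp
    rw [Nat.add_sub_cancel, T.depth_child w p hp] at hxp
    exact mem_sub_iff.mpr ⟨hxV, hxp⟩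

lemma aIdx_depth_eq_parent_of_mem_subUp {w x : α} (h : x ∈ T.subUp V (T.parent w)) :
    T.aIdx x (T.depth w) = T.parent w := by
  cases hp : T.parent w with
  | none => rw [T.depth_root w hp]; rfl
  | some p =>
    rw [hp] at h
    rw [T.depth_child w p hp]
    exact (mem_sub_iff.mp h).2

lemma mem_childrenOf_of_aIdx_eq_some (hV : T.Closed V) {x d : α} {k : ℕ} (hx : x ∈ V)
    (h : T.aIdx x (k + 1) = some d) : d ∈ T.childrenOf V (T.aIdx x k) ∧ x ∈ T.sub V d := by
  have hxd : x ∈ T.sub V d := by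
    rw [mem_sub_iff, depth_succ_of_aIdx_eq_some h]
    exact ⟨hx, h⟩
  exact ⟨Finset.mem_filter.mpr ⟨hV.mem_of_mem_sub hxd, parent_eq_aIdx_pred h⟩, hxd⟩

lemma exists_aIdx_eq_some_of_le {x w : α} {j k : ℕ} (h : T.aIdx x k = some w) (hj : 1 ≤ j)
    (hjk : j ≤ k) : ∃ v, T.aIdx x j = some v := by
  obtain ⟨k, rfl⟩ : ∃ k', k = k' + 1 := ⟨k - 1, by omega⟩
  obtain ⟨j, rfl⟩ : ∃ j', j = j' + 1 := ⟨j - 1, by omega⟩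
  rw [aIdx_succ] at h ⊢
  have hk := (List.getElem?_eq_some_iff.mp h).1
  exact ⟨_, List.getElem?_eq_getElem (by omega)⟩

lemma eq_of_mem_sub_of_mem_childrenOf {c : Option α} {r r' x : α}
    (hr : r ∈ T.childrenOf V c) (hr' : r' ∈ T.childrenOf V c) (hx : x ∈ T.sub V r)
    (hx' : x ∈ T.sub V r') : r = r' :=
  eq_of_mem_sub_of_mem_sub
    (depth_eq_of_parent_eq ((Finset.mem_filter.mp hr).2.trans (Finset.mem_filter.mp hr').2.symm))
    hx hx'

end Tree

section Mechanism

variable {T : TreeNet α} {V : Finset α} {val : α → ℝ}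

lemma pauc_eq_vmax (hb : α) (k : ℕ) :
    T.pauc V val hb k = vmax val (V \ T.subUp V (T.aIdx hb k)) := by
  unfold pauc
  split <;> simp_all [subUp, vmax]

lemma exists_aIdx_eq_some_of_le_stepJ {hb : α} {j : ℕ} (hj1 : 1 ≤ j)
    (hj : j ≤ T.stepJ V val hb) : ∃ w, T.aIdx hb j = some w := by
  have hne : {k | 1 ≤ k ∧ T.Stops V val hb k}.Nonempty := by
    by_contra hempty
    rw [Set.not_nonempty_iff_eq_empty] at hempty
    simp [stepJ, hempty] at hj
    omega
  obtain ⟨-, i, hi, -⟩ := Nat.sInf_mem hne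
  exact exists_aIdx_eq_some_of_le hi hj1 hj

/-- `V ∖ (V_{a'_k} ∪ V_q)`, over which `S_{-q}` takes its maximum at step `k`. -/
def outside (T : TreeNet α) (V : Finset α) (h' q : α) (k : ℕ) : Finset α :=
  V \ (T.subO V (T.aIdx h' k) ∪ T.sub V q)

lemma Sneg_eq_ite {sel : Finset α → Option α} {hb q h' : α} {j : ℕ}
    (h : sel (V \ T.sub V q) = some h') :
    T.Sneg V val sel hb j q = if T.aIdx h' (j - 1) = T.aIdx hb (j - 1) then
      vmax val (T.outside V h' q j) - T.pauc V val hb (j - 1) else 0 := by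
  simp only [Sneg, h]
  rfl

section Step

variable {w q h' : α}

lemma exists_mem_childrenOf_of_mem_subO (hV : T.Closed V) {y : α} (hh' : h' ∈ V)
    (hcond : T.aIdx h' (T.depth w) = T.parent w)
    (hy : y ∈ T.subO V (T.aIdx h' (T.depth w + 1))) :
    ∃ d ∈ T.childrenOf V (T.parent w), T.aIdx h' (T.depth w + 1) = some d ∧ y ∈ T.sub V d := by
  cases hd : T.aIdx h' (T.depth w + 1) with
  | none => simp [hd, subO] at hy
  | some d =>
    rw [hd] at hy
    have hdX := (mem_childrenOf_of_aIdx_eq_some hV hh' hd).1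
    rw [hcond] at hdX
    exact ⟨d, hdX, rfl, hy⟩

lemma vmax_outside_le (hval : ∀ x ∈ V, 0 ≤ val x) (hh' : h' ∈ V)
    (hh'top : ∀ x ∈ V \ T.sub V q, val x ≤ val h') :
    vmax val (T.outside V h' q (T.depth w + 1)) ≤ vmax val (V \ T.sub V w) := by
  refine vmax_le (vmax_nonneg fun x hx => hval x (Finset.mem_sdiff.mp hx).1) fun x hx => ?_
  simp only [outside, Finset.mem_sdiff, Finset.mem_union, not_or] at hx
  by_cases hxw : x ∈ T.sub V w
  · have hh'w : h' ∉ T.sub V w := fun hh'w => hx.2.1 (by rw [(mem_sub_iff.mp hh'w).2]; exact hxw)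
    exact (hh'top x (Finset.mem_sdiff.mpr ⟨hx.1, hx.2.2⟩)).trans
      (le_vmax (Finset.mem_sdiff.mpr ⟨hh', hh'w⟩))
  · exact le_vmax (Finset.mem_sdiff.mpr ⟨hx.1, hxw⟩)

lemma vmax_compl_sub_le_max_outside (hV : T.Closed V) (hval : ∀ x ∈ V, 0 ≤ val x)
    (hh' : h' ∈ V) (hcond : T.aIdx h' (T.depth w) = T.parent w)
    (hq : q ∈ T.childrenOf V (T.parent w)) {μ : ℝ}
    (hμ : ∀ r ∈ T.childrenOf V (T.parent w), r ≠ w → vmax val (T.sub V r) ≤ μ) :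
    vmax val (V \ T.sub V w) ≤ max (vmax val (T.outside V h' q (T.depth w + 1))) μ := by
  refine vmax_le (le_max_of_le_left (vmax_nonneg fun x hx => hval x (Finset.mem_sdiff.mp hx).1))
    fun y hy => ?_
  obtain ⟨hyV, hyw⟩ := Finset.mem_sdiff.mp hy
  by_cases hyE : y ∈ T.outside V h' q (T.depth w + 1)
  · exact le_max_of_le_left (le_vmax hyE)
  obtain ⟨r, hr, hyr⟩ : ∃ r ∈ T.childrenOf V (T.parent w), y ∈ T.sub V r := by
    simp only [outside, Finset.mem_sdiff, Finset.mem_union, hyV, true_and, not_not] at hyE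
    rcases hyE with hyD | hyq
    · obtain ⟨d, hd, -, hyd⟩ := exists_mem_childrenOf_of_mem_subO hV hh' hcond hyD
      exact ⟨d, hd, hyd⟩
    · exact ⟨q, hq, hyq⟩
  exact le_max_of_le_right ((le_vmax hyr).trans (hμ r hr (by rintro rfl; exact hyw hyr)))

lemma vmax_sub_le_vmax_outside (hV : T.Closed V) (hval : ∀ x ∈ V, 0 ≤ val x) (hh' : h' ∈ V)
    (hcond : T.aIdx h' (T.depth w) = T.parent w) (hq : q ∈ T.childrenOf V (T.parent w))
    {r : α} (hr : r ∈ T.childrenOf V (T.parent w)) (hrq : r ≠ q)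
    (hrd : T.aIdx h' (T.depth w + 1) ≠ some r) :
    vmax val (T.sub V r) ≤ vmax val (T.outside V h' q (T.depth w + 1)) := by
  refine vmax_mono (fun x hx => ?_) fun x hx => hval x (Finset.mem_sdiff.mp hx).1
  simp only [outside, Finset.mem_sdiff, Finset.mem_union, not_or]
  refine ⟨sub_subset r hx, fun hxD => ?_,
    fun hxq => hrq (eq_of_mem_sub_of_mem_childrenOf hr hq hx hxq)⟩
  obtain ⟨d, hd, hdeq, hxd⟩ := exists_mem_childrenOf_of_mem_subO hV hh' hcond hxD
  exact hrd (hdeq.trans (congrArg some (eq_of_mem_sub_of_mem_childrenOf hd hr hxd hx)))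

lemma vmax_compl_sub_le_of_sibling {hb : α} {c : Option α} (hval : ∀ x ∈ V, 0 ≤ val x)
    (hbw : hb ∈ T.sub V w) (htop : ∀ x ∈ V, val x ≤ val hb) (hw : w ∈ T.childrenOf V c)
    (hq : q ∈ T.childrenOf V c) (hh' : h' ∈ V) (hh'top : ∀ x ∈ V \ T.sub V q, val x ≤ val h') :
    vmax val (V \ T.sub V w) ≤ val h' := by
  refine vmax_le (hval h' hh') fun x hx => ?_
  rcases eq_or_ne q w with rfl | hqw
  · exact hh'top x hx
  · have hbq : hb ∉ T.sub V q := fun h => hqw (eq_of_mem_sub_of_mem_childrenOf hq hw h hbw)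
    exact (htop x (Finset.mem_sdiff.mp hx).1).trans
      (hh'top hb (Finset.mem_sdiff.mpr ⟨sub_subset w hbw, hbq⟩))

lemma vmax_compl_sub_le_of_aIdx_ne {hb : α} (hval : ∀ x ∈ V, 0 ≤ val x)
    (hbw : hb ∈ T.sub V w) (htop : ∀ x ∈ V, val x ≤ val hb)
    (hw : w ∈ T.childrenOf V (T.parent w)) (hq : q ∈ T.childrenOf V (T.parent w)) (hh' : h' ∈ V)
    (hh'top : ∀ x ∈ V \ T.sub V q, val x ≤ val h') (hcond : T.aIdx h' (T.depth w) ≠ T.parent w) :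
    vmax val (V \ T.sub V w) ≤ vmax val (V \ T.subUp V (T.parent w)) :=
  (vmax_compl_sub_le_of_sibling hval hbw htop hw hq hh' hh'top).trans
    (le_vmax (Finset.mem_sdiff.mpr ⟨hh', fun h => hcond (aIdx_depth_eq_parent_of_mem_subUp h)⟩))

lemma vmax_compl_subUp_parent_le (hval : ∀ x ∈ V, 0 ≤ val x) :
    vmax val (V \ T.subUp V (T.parent w)) ≤ vmax val (V \ T.sub V w) :=
  vmax_mono (Finset.sdiff_subset_sdiff subset_rfl (sub_subset_subUp_parent w))
    fun x hx => hval x (Finset.mem_sdiff.mp hx).1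

lemma vmax_sub_le_of_ne {X : Finset α} {hb x1 x2 : α} (hval : ∀ x ∈ V, 0 ≤ val x)
    (hbV : hb ∈ V) (htop : ∀ x ∈ V, val x ≤ val hb) (hbw : hb ∈ T.sub V w) (hwX : w ∈ X)
    (hle : ∀ r ∈ X, r ≠ x1 → vmax val (T.sub V r) ≤ vmax val (T.sub V x2)) :
    ∀ r ∈ X, r ≠ w → vmax val (T.sub V r) ≤ vmax val (T.sub V x2) := by
  intro r hr hrw
  rcases eq_or_ne r x1 with rfl | hr1
  · exact (vmax_le (hval hb hbV) fun x hx => htop x (sub_subset r hx)).trans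
      ((le_vmax hbw).trans (hle w hwX hrw.symm))
  · exact hle r hr hr1

lemma Sneg_bounds (hV : T.Closed V) (hval : ∀ x ∈ V, 0 ≤ val x)
    {sel : Finset α → Option α} (hsel : SelValid val sel) {hb : α} (hbV : hb ∈ V)
    (htop : ∀ x ∈ V, val x ≤ val hb) {j : ℕ} (hw : T.aIdx hb j = some w) {x1 x2 x3 : α}
    (hx1 : x1 ∈ T.X V hb j) (hx2 : x2 ∈ T.X V hb j) (hx3 : x3 ∈ T.X V hb j)
    (h12 : x1 ≠ x2) (h13 : x1 ≠ x3) (h23 : x2 ≠ x3)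
    (hm21 : vmax val (T.sub V x2) ≤ vmax val (T.sub V x1))
    (hm32 : vmax val (T.sub V x3) ≤ vmax val (T.sub V x2))
    (hμ : ∀ r ∈ T.X V hb j, r ≠ w → vmax val (T.sub V r) ≤ vmax val (T.sub V x2))
    (hq : q ∈ T.X V hb j) :
    T.Sneg V val sel hb j q ≤ T.pauc V val hb j - T.pauc V val hb (j - 1) ∧
    T.pauc V val hb j - T.pauc V val hb (j - 1) - T.Sneg V val sel hb j q ≤
      vmax val (T.sub V x2) - vmax val (T.sub V x3) ∧
    (q ≠ x1 → q ≠ x2 → T.pauc V val hb j - T.pauc V val hb (j - 1) ≤ T.Sneg V val sel hb j q) := by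
  obtain rfl := depth_succ_of_aIdx_eq_some hw
  have hpar := parent_eq_aIdx_pred hw
  rw [Nat.add_sub_cancel] at hpar ⊢
  rw [X, Nat.add_sub_cancel, ← hpar] at hx1 hx2 hx3 hμ hq
  rw [pauc_eq_vmax, pauc_eq_vmax, hw, ← hpar, subUp]
  obtain ⟨hwX, hbw⟩ := mem_childrenOf_of_aIdx_eq_some hV hbV hw
  rw [← hpar] at hwX
  obtain ⟨r, hr, hrq⟩ : ∃ r ∈ T.childrenOf V (T.parent w), r ≠ q := by
    rcases eq_or_ne x1 q with rfl | h1q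
    exacts [⟨x2, hx2, h12.symm⟩, ⟨x1, hx1, h1q⟩]
  have hrV := (Finset.mem_filter.mp hr).1
  have hne : (V \ T.sub V q).Nonempty := ⟨r, Finset.mem_sdiff.mpr ⟨hrV,
    fun h => hrq (eq_of_mem_sub_of_mem_childrenOf hr hq (mem_sub_self hrV) h)⟩⟩
  obtain ⟨h', hsel'⟩ := (hsel _).1 hne
  obtain ⟨hh'mem, hh'top⟩ := (hsel _).2 h' hsel'
  have hh' := (Finset.mem_sdiff.mp hh'mem).1
  have hop := vmax_compl_subUp_parent_le (T := T) (w := w) hval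
  rw [Sneg_eq_ite hsel', Nat.add_sub_cancel, pauc_eq_vmax, ← hpar]
  split_ifs with hcond
  · have hEp := vmax_outside_le (w := w) hval hh' hh'top
    have hpE := vmax_compl_sub_le_max_outside hV hval hh' hcond hq hμ
    obtain ⟨h3E, h2E⟩ := le_of_excluded_le_two h12 h13 h23 hm21 hm32 fun r hr hrq hrd =>
      vmax_sub_le_vmax_outside hV hval hh' hcond hq
        (by rcases hr with rfl | rfl | rfl <;> assumption) hrq hrd
    refine ⟨by linarith, ?_, fun hq1 hq2 => ?_⟩
    · rcases le_max_iff.mp hpE with h | h <;> linarith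
    · linarith [hpE.trans (max_le le_rfl (h2E hq1 hq2))]
  · have hpo := vmax_compl_sub_le_of_aIdx_ne hval hbw htop hwX hq hh' hh'top hcond
    refine ⟨by linarith, by linarith, fun _ _ => by linarith⟩

end Step

end Mechanism

end TreeNet

/-- Quantitative per-step surplus bound for asymptotic budget
balance: for every executed step `j` of NRM in trees, with `X_j` ordered by
decreasing subtree maxima `v^{(1)}_{V_{x₁}} ≥ v^{(1)}_{V_{x₂}} ≥ …` and
`λ = (n_{x₁} + n_{x₂}) / n_{X_j}`, the step surplus satisfies
`0 ≤ p^{auc}_{a_j} - p^{auc}_{a_{j-1}} - Σ_{q ∈ X_j} R_q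
   ≤ λ ⬝ (v^{(1)}_{V_{x₂}} - v^{(1)}_{V_{x₃}}) ≤ λ ⬝ M`,
where `M` is any upper bound on all reported valuations. -/
theorem TreeNet.nrm_tree_step_surplus_bound
    {α : Type} [Fintype α] [DecidableEq α] (T : TreeNet α)
    (V : Finset α) (hV : T.Closed V)
    (val : α → ℝ) (hval : ∀ i ∈ V, 0 ≤ val i)
    (M : ℝ) (hM : ∀ i ∈ V, val i ≤ M)                      -- any valuation bound
    (sel : Finset α → Option α) (hsel : TreeNet.SelValid val sel)
    (hb : α) (hhb : TreeNet.IsTop V val hb)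
    (j : ℕ) (hj1 : 1 ≤ j) (hj2 : j ≤ T.stepJ V val hb)    -- an executed step
    -- an enumeration x₁ :: x₂ :: x₃ :: rest of X_j ordered by decreasing
    -- subtree maxima:
    (x1 x2 x3 : α) (rest : List α)
    (hnd : (x1 :: x2 :: x3 :: rest).Nodup)
    (henum : (x1 :: x2 :: x3 :: rest).toFinset = T.X V hb j)
    (hsorted : (x1 :: x2 :: x3 :: rest).Chain'
      (fun x y => TreeNet.vmax val (T.sub V y) ≤ TreeNet.vmax val (T.sub V x))) :
    0 ≤ T.pauc V val hb j - T.pauc V val hb (j - 1)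
        - (∑ q ∈ T.X V hb j, T.R V val sel hb j q) ∧
    T.pauc V val hb j - T.pauc V val hb (j - 1)
        - (∑ q ∈ T.X V hb j, T.R V val sel hb j q) ≤
      ((T.nsub V x1 : ℝ) + (T.nsub V x2 : ℝ)) / (T.nX V hb j : ℝ) *
        (TreeNet.vmax val (T.sub V x2) - TreeNet.vmax val (T.sub V x3)) ∧
    ((T.nsub V x1 : ℝ) + (T.nsub V x2 : ℝ)) / (T.nX V hb j : ℝ) *
        (TreeNet.vmax val (T.sub V x2) - TreeNet.vmax val (T.sub V x3)) ≤
      ((T.nsub V x1 : ℝ) + (T.nsub V x2 : ℝ)) / (T.nX V hb j : ℝ) * M := by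
  obtain ⟨hbV, htop⟩ := hhb
  obtain ⟨w, hw⟩ := exists_aIdx_eq_some_of_le_stepJ hj1 hj2
  obtain ⟨hwX, hbw⟩ := mem_childrenOf_of_aIdx_eq_some hV hbV (k := j - 1)
    (by rwa [Nat.sub_add_cancel hj1])
  have hmem : ∀ r ∈ x1 :: x2 :: x3 :: rest, r ∈ T.X V hb j :=
    fun r hr => henum ▸ List.mem_toFinset.mpr hr
  have hx1 := hmem x1 (by simp)
  have hx2 := hmem x2 (by simp)
  obtain ⟨⟨h12, h13, -⟩, ⟨h23, -⟩, -⟩ : (x1 ≠ x2 ∧ x1 ≠ x3 ∧ _) ∧ (x2 ≠ x3 ∧ _) ∧ _ := by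
    simpa using hnd
  have hle2 : ∀ r ∈ T.X V hb j, r ≠ x1 → vmax val (T.sub V r) ≤ vmax val (T.sub V x2) := by
    rw [← henum]
    exact fun r hr => List.le_second_of_isChain hsorted (List.mem_toFinset.mp hr)
  have hbounds := fun q (hq : q ∈ T.X V hb j) =>
    Sneg_bounds (sel := sel) hV hval hsel hbV htop hw hx1 hx2 (hmem x3 (by simp)) h12 h13 h23
      (List.isChain_cons_cons.mp hsorted).1 (hle2 x3 (hmem x3 (by simp)) h13.symm)
      (vmax_sub_le_of_ne hval hbV htop hbw hwX hle2) hq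
  obtain ⟨hlo, hhi⟩ := sub_sum_weighted_bounds (w := fun q => (T.nsub V q : ℝ))
    (s := fun q => T.Sneg V val sel hb j q) (N := (T.nX V hb j : ℝ)) (by simp [nX])
    (fun _ _ => Nat.cast_nonneg _) hx1 hx2 h12
    (Nat.cast_pos.mpr (Finset.card_pos.mpr ⟨x1, mem_sub_self (Finset.mem_filter.mp hx1).1⟩))
    (fun q hq => (hbounds q hq).1) (fun q hq => (hbounds q hq).2.1)
    (fun q hq => (hbounds q hq).2.2)
  refine ⟨hlo, hhi, mul_le_mul_of_nonneg_left ?_ (by positivity)⟩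
  have hm2 : vmax val (T.sub V x2) ≤ M :=
    vmax_le ((hval hb hbV).trans (hM hb hbV)) fun x hx => hM x (sub_subset x2 hx)
  linarith [vmax_nonneg (val := val) (D := T.sub V x3) fun x hx => hval x (sub_subset x3 hx)]
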